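/- Let A be an n×n complex matrix. Let P = (AA*)^{1/2} and Q = (A*A)^{1/2} be the unique positive semidefinite Hermitian square roots of AA* and A*A, and let S = (A + Aᵀ)/2 and C = (A − Aᵀ)/2. The following are equivalent: (a) conj(S)·S + conj(C)·C commutes with conj(S)·C + conj(C)·S; (b) A is congruence normal, i.e., conj(A)·A is normal; (c) A·conj(P) = conj(Q)·A. -/

import Mathlib

/-!
Write `B = conj(A)·A`. Since `conj(Aᵀ)·Aᵀ = B*`, the two matrices in (a) are the real part of `B`
and `i` times its imaginary part, so (a) says that these parts commute, i.e. that `B` is normal.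

If `B` is normal, so is `conj(B) = A·conj(A)`, and `A` intertwines them: `(A·conj A)·A = A·B`.
By the Fuglede–Putnam theorem `A` intertwines their adjoints as well, which is the identity
`AA*·Aᵀ = Aᵀ·A*A`; conversely this identity makes `B` normal by a direct computation.
Finally `AA*·Aᵀ = Aᵀ·A*A` reads `P²Aᵀ = AᵀQ²`, which is equivalent to `PAᵀ = AᵀQ` because on the
(finite) spectra of `P²` and `Q²` the square root is a single polynomial; transposing and using
`Pᵀ = conj P` gives (c).
-/

open Matrix ComplexConjugate Polynomial
open scoped ComplexOrder ComplexStarModule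

theorem SemiconjBy.aeval {R M : Type*} [CommSemiring R] [Semiring M] [Algebra R M] {x a b : M}
    (h : SemiconjBy x a b) (p : R[X]) : SemiconjBy x (aeval a p) (aeval b p) := by
  induction p using Polynomial.induction_on' with
  | add p q hp hq => simpa only [map_add] using hp.add_right hq
  | monomial k c =>
    simpa only [aeval_monomial] using
      SemiconjBy.mul_right (Algebra.commutes c x).symm (h.pow_right k)

namespace Matrix

section Conj

variable {m n : Type*}

@[simp]
theorem map_conj_map_conj (M : Matrix m n ℂ) : (M.map conj).map conj = M := by
  ext; simp

@[simp]
theorem map_conj_transpose (M : Matrix m n ℂ) : Mᵀ.map conj = Mᴴ := rfl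

@[simp]
theorem map_conj_conjTranspose (M : Matrix m n ℂ) : Mᴴ.map conj = Mᵀ := by
  ext; simp

theorem conjTranspose_map_conj (M : Matrix m n ℂ) : (M.map conj)ᴴ = Mᵀ := by
  ext; simp

theorem IsHermitian.map_conj {M : Matrix n n ℂ} (hM : M.IsHermitian) : M.map conj = Mᵀ := by
  simpa only [hM.eq] using map_conj_conjTranspose M

theorem isStarNormal_map_conj [Fintype n] {M : Matrix n n ℂ} (hM : IsStarNormal M) :
    IsStarNormal (M.map conj) := by
  rw [isStarNormal_iff, commute_iff_eq] at hM ⊢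
  simpa only [star_eq_conjTranspose, Matrix.map_mul, map_conj_conjTranspose,
    conjTranspose_map_conj] using congr(($hM).map conj)

theorem map_conj_half_add_transpose (A : Matrix n n ℂ) :
    ((2 : ℂ)⁻¹ • (A + Aᵀ)).map conj = (2 : ℂ)⁻¹ • (A.map conj + Aᴴ) := by
  ext; simp [map_ofNat, mul_add]

theorem map_conj_half_sub_transpose (A : Matrix n n ℂ) :
    ((2 : ℂ)⁻¹ • (A - Aᵀ)).map conj = (2 : ℂ)⁻¹ • (A.map conj - Aᴴ) := by
  ext; simp [map_ofNat, mul_sub]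

end Conj

variable {n : Type*} [Fintype n] [DecidableEq n]

theorem map_conj_mul_add_map_conj_mul_eq_realPart {A S C : Matrix n n ℂ}
    (hS : S = (2 : ℂ)⁻¹ • (A + Aᵀ)) (hC : C = (2 : ℂ)⁻¹ • (A - Aᵀ)) :
    S.map conj * S + C.map conj * C = ℜ (A.map conj * A) := by
  subst hS hC
  rw [realPart_apply_coe, star_eq_conjTranspose, conjTranspose_mul, conjTranspose_map_conj,
    map_conj_half_add_transpose, map_conj_half_sub_transpose]
  simp only [smul_mul_assoc, mul_smul_comm, mul_add, add_mul, mul_sub, sub_mul]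
  module

theorem map_conj_mul_add_map_conj_mul_eq_I_smul_imaginaryPart {A S C : Matrix n n ℂ}
    (hS : S = (2 : ℂ)⁻¹ • (A + Aᵀ)) (hC : C = (2 : ℂ)⁻¹ • (A - Aᵀ)) :
    S.map conj * C + C.map conj * S = Complex.I • ℑ (A.map conj * A) := by
  subst hS hC
  rw [imaginaryPart_apply_coe, smul_smul, mul_neg, Complex.I_mul_I, neg_neg, one_smul,
    star_eq_conjTranspose, conjTranspose_mul, conjTranspose_map_conj,
    map_conj_half_add_transpose, map_conj_half_sub_transpose]
  simp only [smul_mul_assoc, mul_smul_comm, mul_add, add_mul, mul_sub, sub_mul]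
  module

open scoped Matrix.Norms.L2Operator in
theorem isStarNormal_map_conj_mul_self_iff (A : Matrix n n ℂ) :
    IsStarNormal (A.map conj * A) ↔ SemiconjBy Aᵀ (Aᴴ * A) (A * Aᴴ) := by
  have hstar : star (A.map conj * A) = Aᴴ * Aᵀ := by
    rw [star_eq_conjTranspose, conjTranspose_mul, conjTranspose_map_conj]
  constructor
  · intro hB
    have hA : SemiconjBy A (A.map conj * A) (A * A.map conj) := (mul_assoc _ _ _).symm
    have hB' : IsStarNormal (A * A.map conj) := by
      simpa only [Matrix.map_mul, map_conj_map_conj] using isStarNormal_map_conj hB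
    have h := hA.star_right hB hB'
    rw [hstar, star_eq_conjTranspose, conjTranspose_mul, conjTranspose_map_conj] at h
    simpa only [SemiconjBy, mul_assoc, eq_comm] using h
  · intro h
    have h_conj : Aᴴ * (Aᵀ * A.map conj) = A.map conj * Aᵀ * Aᴴ := by
      simpa only [Matrix.map_mul, map_conj_transpose, map_conj_conjTranspose] using
        congr(($h).map conj)
    rw [isStarNormal_iff, commute_iff_eq, hstar]
    calc Aᴴ * Aᵀ * (A.map conj * A) = A.map conj * Aᵀ * Aᴴ * A := by
          simp only [← h_conj, mul_assoc]
      _ = A.map conj * A * (Aᴴ * Aᵀ) := by simp only [h.eq, mul_assoc]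

namespace PosSemidef

theorem aeval_mul_self {R : Matrix n n ℂ} (hR : R.PosSemidef) {p : ℝ[X]}
    (hp : ∀ x ∈ spectrum ℝ (R * R), p.eval x = √x) : aeval (R * R) p = R := by
  have hRR : (R * R).PosSemidef := by
    simpa only [hR.1.eq] using posSemidef_self_mul_conjTranspose R
  open scoped MatrixOrder in
  calc aeval (R * R) p = cfc (fun x : ℝ => p.eval x) (R * R) :=
        (cfc_polynomial p (R * R) hRR.1).symm
    _ = cfc Real.sqrt (R * R) := cfc_congr hp
    _ = R := by
      rw [← cfcₙ_eq_cfc, ← CFC.sqrt_eq_real_sqrt (R * R) hRR.nonneg,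
        CFC.sqrt_mul_self R hR.nonneg]

theorem semiconjBy_iff_mul_self {P Q X : Matrix n n ℂ} (hP : P.PosSemidef) (hQ : Q.PosSemidef) :
    SemiconjBy X Q P ↔ SemiconjBy X (Q * Q) (P * P) := by
  refine ⟨fun h => h.mul_right h, fun h => ?_⟩
  classical
  set s : Finset ℝ := (finite_real_spectrum (A := P * P)).toFinset ∪
    (finite_real_spectrum (A := Q * Q)).toFinset
  set p : ℝ[X] := Lagrange.interpolate s id Real.sqrt
  have hp : ∀ x ∈ s, p.eval x = √x := fun x hx =>
    Lagrange.eval_interpolate_at_node Real.sqrt Function.injective_id.injOn hx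
  have hpP := hP.aeval_mul_self fun x hx => hp x (Finset.mem_union_left _ (by simpa using hx))
  have hpQ := hQ.aeval_mul_self fun x hx => hp x (Finset.mem_union_right _ (by simpa using hx))
  simpa only [hpP, hpQ] using h.aeval p

end PosSemidef

end Matrix

/-- Characterizations of congruence normal matrices: with `P = (AA*)^{1/2}`,
`Q = (A*A)^{1/2}`, `S = (A + Aᵀ)/2`, `C = (A − Aᵀ)/2`, the following are equivalent:
(a) `conj(S)S + conj(C)C` commutes with `conj(S)C + conj(C)S`;
(b) `conj(A)·A` is normal; (c) `A·conj(P) = conj(Q)·A`. -/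
theorem stmt_13 {n : ℕ} (A P Q S C : Matrix (Fin n) (Fin n) ℂ)
    (hP : P.PosSemidef) (hPA : P * P = A * Aᴴ)
    (hQ : Q.PosSemidef) (hQA : Q * Q = Aᴴ * A)
    (hS : S = (2 : ℂ)⁻¹ • (A + Aᵀ)) (hC : C = (2 : ℂ)⁻¹ • (A - Aᵀ)) :
    (((S.map (starRingEnd ℂ) * S + C.map (starRingEnd ℂ) * C) *
        (S.map (starRingEnd ℂ) * C + C.map (starRingEnd ℂ) * S) =
      (S.map (starRingEnd ℂ) * C + C.map (starRingEnd ℂ) * S) *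
        (S.map (starRingEnd ℂ) * S + C.map (starRingEnd ℂ) * C)) ↔
      ((A.map (starRingEnd ℂ) * A)ᴴ * (A.map (starRingEnd ℂ) * A) =
        (A.map (starRingEnd ℂ) * A) * (A.map (starRingEnd ℂ) * A)ᴴ)) ∧
    (((A.map (starRingEnd ℂ) * A)ᴴ * (A.map (starRingEnd ℂ) * A) =
        (A.map (starRingEnd ℂ) * A) * (A.map (starRingEnd ℂ) * A)ᴴ) ↔
      A * P.map (starRingEnd ℂ) = Q.map (starRingEnd ℂ) * A) := by
  have h_normal : IsStarNormal (A.map conj * A) ↔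
      (A.map conj * A)ᴴ * (A.map conj * A) = A.map conj * A * (A.map conj * A)ᴴ :=
    (isStarNormal_iff _).trans (commute_iff_eq _ _)
  refine ⟨?_, ?_⟩
  · rw [← commute_iff_eq, map_conj_mul_add_map_conj_mul_eq_realPart hS hC,
      map_conj_mul_add_map_conj_mul_eq_I_smul_imaginaryPart hS hC,
      Commute.smul_right_iff₀ Complex.I_ne_zero, ← isStarNormal_iff_commute_realPart_imaginaryPart,
      h_normal]
  · rw [← h_normal, isStarNormal_map_conj_mul_self_iff, ← hPA, ← hQA,
      ← hP.semiconjBy_iff_mul_self hQ, hP.1.map_conj, hQ.1.map_conj, SemiconjBy, ← transpose_inj,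
      transpose_mul, transpose_mul, transpose_transpose]
    exact eq_comm
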